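/- Discrete stability estimate: let Λ be a discrete operator of positive type (as defined in the context) whose coefficients additionally satisfy, for every interior index 1 ≤ i ≤ N−1 and every component 1 ≤ k ≤ M, the row-sum bound r_i^{k,−} + r_i^{k,c} + r_i^{k,+} + (Δt/2) Σ_{m≠k} ( q_i^{k,−}a_{km}(x_{i−1}) + q_i^{k,c}a_{km}(x_i) + q_i^{k,+}a_{km}(x_{i+1}) ) ≥ 1. Then every mesh function V : {0,…,N} → ℝ^M with V_{k,0} = V_{k,N} = 0 for all k satisfies max_{k, 0≤i≤N} |V_{k,i}| ≤ max_{k, 1≤i≤N−1} |(ΛV)_{k,i}|. -/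
import Mathlib


/-- The discrete operator `Λ` at an interior node `i`, component `k`. -/
noncomputable def discOp (M : ℕ) (Δt : ℝ) (x : ℕ → ℝ)
    (a : Fin M → Fin M → ℝ → ℝ)
    (rm rc rp qm qc qp : ℕ → Fin M → ℝ)
    (V : ℕ → Fin M → ℝ) (k : Fin M) (i : ℕ) : ℝ :=
  rm i k * V (i-1) k + rc i k * V i k + rp i k * V (i+1) k
    + (Δt/2) * ∑ m ∈ Finset.univ \ {k},
        (qm i k * a k m (x (i-1)) * V (i-1) m
          + qc i k * a k m (x i) * V i m
          + qp i k * a k m (x (i+1)) * V (i+1) m)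

lemma discOp_neg (M : ℕ) (Δt : ℝ) (x : ℕ → ℝ)
    (a : Fin M → Fin M → ℝ → ℝ)
    (rm rc rp qm qc qp : ℕ → Fin M → ℝ)
    (V : ℕ → Fin M → ℝ) (k : Fin M) (i : ℕ) :
    discOp M Δt x a rm rc rp qm qc qp (fun j l => -V j l) k i
      = - discOp M Δt x a rm rc rp qm qc qp V k i := by
  unfold discOp
  rw [show (∑ m ∈ Finset.univ \ {k},
        (qm i k * a k m (x (i-1)) * (-V (i-1) m)
          + qc i k * a k m (x i) * (-V i m)
          + qp i k * a k m (x (i+1)) * (-V (i+1) m)))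
      = - ∑ m ∈ Finset.univ \ {k},
        (qm i k * a k m (x (i-1)) * V (i-1) m
          + qc i k * a k m (x i) * V i m
          + qp i k * a k m (x (i+1)) * V (i+1) m) from by
    rw [← Finset.sum_neg_distrib]
    exact Finset.sum_congr rfl fun m _ => by ring]
  ring

/-- One-sided maximum principle. -/
lemma discOp_one_sided
    (M : ℕ) (hM : 2 ≤ M) (N : ℕ) (hN : 2 ≤ N)
    (Δt : ℝ) (hΔt : 0 ≤ Δt)
    (x : ℕ → ℝ)
    (a : Fin M → Fin M → ℝ → ℝ)
    (ha : ∀ (k m : Fin M), k ≠ m → ∀ j : ℕ, j ≤ N → a k m (x j) ≤ 0)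
    (rm rc rp qm qc qp : ℕ → Fin M → ℝ)
    (h_pos : ∀ i : ℕ, 1 ≤ i → i ≤ N - 1 → ∀ k,
      rm i k ≤ 0 ∧ rp i k ≤ 0 ∧ 0 < rc i k ∧
      0 ≤ qm i k ∧ 0 ≤ qc i k ∧ 0 ≤ qp i k)
    (h_rowsum : ∀ i : ℕ, 1 ≤ i → i ≤ N - 1 → ∀ k,
      1 ≤ rm i k + rc i k + rp i k
        + (Δt/2) * ∑ m ∈ Finset.univ \ {k},
            (qm i k * a k m (x (i-1)) + qc i k * a k m (x i)
              + qp i k * a k m (x (i+1))))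
    (V : ℕ → Fin M → ℝ)
    (h_bc : ∀ k, V 0 k = 0 ∧ V N k = 0)
    (B : ℝ) (hB0 : 0 ≤ B)
    (hB : ∀ i : ℕ, 1 ≤ i → i ≤ N - 1 → ∀ k,
        discOp M Δt x a rm rc rp qm qc qp V k i ≤ B) :
    ∀ i : ℕ, i ≤ N → ∀ k, V i k ≤ B := by
  have hMpos : 0 < M := by omega
  haveI : NeZero M := ⟨by omega⟩
  -- find the maximizer
  have hne : ((Finset.range (N+1)) ×ˢ (Finset.univ : Finset (Fin M))).Nonempty := by
    refine ⟨(0, ⟨0, hMpos⟩), ?_⟩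
    simp
  obtain ⟨p, hpmem, hpmax⟩ :=
    Finset.exists_max_image ((Finset.range (N+1)) ×ˢ (Finset.univ : Finset (Fin M)))
      (fun p => V p.1 p.2) hne
  obtain ⟨i0, k0⟩ := p
  have hi0N : i0 ≤ N := by
    have := Finset.mem_product.1 hpmem
    simpa using Nat.lt_succ_iff.1 (Finset.mem_range.1 this.1)
  set W : ℝ := V i0 k0 with hW
  have hmax : ∀ j : ℕ, j ≤ N → ∀ m : Fin M, V j m ≤ W := by
    intro j hj m
    exact hpmax (j, m) (by simp [Finset.mem_product, Nat.lt_succ_iff, hj])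
  intro i hi k
  rcases le_or_gt W 0 with hWle | hWpos
  · exact le_trans (le_trans (hmax i hi k) hWle) hB0
  · -- maximizer is interior
    have hi0_ne0 : i0 ≠ 0 := by
      intro h
      rw [h] at hW
      rw [(h_bc k0).1] at hW
      exact absurd hW.symm (by linarith)
    have hi0_neN : i0 ≠ N := by
      intro h
      rw [h] at hW
      rw [(h_bc k0).2] at hW
      exact absurd hW.symm (by linarith)
    have h1 : 1 ≤ i0 := by omega
    have h2 : i0 ≤ N - 1 := by omega
    have him : i0 - 1 ≤ N := by omega
    have hip : i0 + 1 ≤ N := by omega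
    obtain ⟨hrm, hrp, hrc, hqm, hqc, hqp⟩ := h_pos i0 h1 h2 k0
    have hΔ2 : (0:ℝ) ≤ Δt / 2 := by linarith
    -- core estimate: W ≤ ΛV at (i0, k0)
    have key : W ≤ discOp M Δt x a rm rc rp qm qc qp V k0 i0 := by
      have hrow := h_rowsum i0 h1 h2 k0
      calc W = W * 1 := by ring
        _ ≤ W * (rm i0 k0 + rc i0 k0 + rp i0 k0
            + (Δt/2) * ∑ m ∈ Finset.univ \ {k0},
                (qm i0 k0 * a k0 m (x (i0-1)) + qc i0 k0 * a k0 m (x i0)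
                  + qp i0 k0 * a k0 m (x (i0+1)))) :=
          mul_le_mul_of_nonneg_left hrow (le_of_lt hWpos)
        _ = rm i0 k0 * W + rc i0 k0 * W + rp i0 k0 * W
            + (Δt/2) * ∑ m ∈ Finset.univ \ {k0},
                (qm i0 k0 * a k0 m (x (i0-1)) * W + qc i0 k0 * a k0 m (x i0) * W
                  + qp i0 k0 * a k0 m (x (i0+1)) * W) := by
            rw [show (∑ m ∈ Finset.univ \ {k0},
                (qm i0 k0 * a k0 m (x (i0-1)) * W + qc i0 k0 * a k0 m (x i0) * W
                  + qp i0 k0 * a k0 m (x (i0+1)) * W))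
              = (∑ m ∈ Finset.univ \ {k0},
                (qm i0 k0 * a k0 m (x (i0-1)) + qc i0 k0 * a k0 m (x i0)
                  + qp i0 k0 * a k0 m (x (i0+1)))) * W from by
              rw [Finset.sum_mul]
              exact Finset.sum_congr rfl fun m _ => by ring]
            ring
        _ ≤ discOp M Δt x a rm rc rp qm qc qp V k0 i0 := by
            unfold discOp
            have hA : rm i0 k0 * W ≤ rm i0 k0 * V (i0-1) k0 :=
              mul_le_mul_of_nonpos_left (hmax _ him k0) hrm
            have hC : rp i0 k0 * W ≤ rp i0 k0 * V (i0+1) k0 :=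
              mul_le_mul_of_nonpos_left (hmax _ hip k0) hrp
            have hS : ∑ m ∈ Finset.univ \ {k0},
                (qm i0 k0 * a k0 m (x (i0-1)) * W + qc i0 k0 * a k0 m (x i0) * W
                  + qp i0 k0 * a k0 m (x (i0+1)) * W)
                ≤ ∑ m ∈ Finset.univ \ {k0},
                (qm i0 k0 * a k0 m (x (i0-1)) * V (i0-1) m
                  + qc i0 k0 * a k0 m (x i0) * V i0 m
                  + qp i0 k0 * a k0 m (x (i0+1)) * V (i0+1) m) := by
              refine Finset.sum_le_sum fun m hm => ?_
              have hmk : k0 ≠ m := by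
                intro h
                simp [Finset.mem_sdiff, h.symm] at hm
              have c1 : qm i0 k0 * a k0 m (x (i0-1)) ≤ 0 :=
                mul_nonpos_of_nonneg_of_nonpos hqm (ha k0 m hmk _ him)
              have c2 : qc i0 k0 * a k0 m (x i0) ≤ 0 :=
                mul_nonpos_of_nonneg_of_nonpos hqc (ha k0 m hmk _ hi0N)
              have c3 : qp i0 k0 * a k0 m (x (i0+1)) ≤ 0 :=
                mul_nonpos_of_nonneg_of_nonpos hqp (ha k0 m hmk _ hip)
              have e1 : qm i0 k0 * a k0 m (x (i0-1)) * W
                  ≤ qm i0 k0 * a k0 m (x (i0-1)) * V (i0-1) m :=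
                mul_le_mul_of_nonpos_left (hmax _ him m) c1
              have e2 : qc i0 k0 * a k0 m (x i0) * W
                  ≤ qc i0 k0 * a k0 m (x i0) * V i0 m :=
                mul_le_mul_of_nonpos_left (hmax _ hi0N m) c2
              have e3 : qp i0 k0 * a k0 m (x (i0+1)) * W
                  ≤ qp i0 k0 * a k0 m (x (i0+1)) * V (i0+1) m :=
                mul_le_mul_of_nonpos_left (hmax _ hip m) c3
              linarith
            have hD := mul_le_mul_of_nonneg_left hS hΔ2
            have hBmid : rc i0 k0 * W = rc i0 k0 * V i0 k0 := by rw [hW]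
            linarith
    exact le_trans (hmax i hi k) (le_trans key (hB i0 h1 h2 k0))

/-- Discrete stability estimate: for a positive-type operator with row sums at
least `1`, every mesh function vanishing at the boundary satisfies
`max |V| ≤ max_{interior} |ΛV|` (expressed through an arbitrary bound `B` on
the interior values of `ΛV`). -/
theorem stmt_15
    (M : ℕ) (hM : 2 ≤ M) (N : ℕ) (hN : 2 ≤ N)
    (Δt : ℝ) (hΔt : 0 < Δt)
    (x : ℕ → ℝ) (hx0 : x 0 = 0) (hxN : x N = 1)
    (hx_mono : ∀ i, i < N → x i < x (i+1))
    (a : Fin M → Fin M → ℝ → ℝ)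
    (ha_cont : ∀ k m, ContinuousOn (a k m) (Set.Icc 0 1))
    (ha_off : ∀ k m, k ≠ m → ∀ y ∈ Set.Icc (0:ℝ) 1, a k m y ≤ 0)
    (rm rc rp qm qc qp : ℕ → Fin M → ℝ)
    (h_pos : ∀ i : ℕ, 1 ≤ i → i ≤ N - 1 → ∀ k,
      rm i k ≤ 0 ∧ rp i k ≤ 0 ∧ 0 < rc i k ∧
      0 ≤ qm i k ∧ 0 ≤ qc i k ∧ 0 ≤ qp i k)
    (h_rowsum : ∀ i : ℕ, 1 ≤ i → i ≤ N - 1 → ∀ k,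
      1 ≤ rm i k + rc i k + rp i k
        + (Δt/2) * ∑ m ∈ Finset.univ \ {k},
            (qm i k * a k m (x (i-1)) + qc i k * a k m (x i)
              + qp i k * a k m (x (i+1))))
    (V : ℕ → Fin M → ℝ)
    (h_bc : ∀ k, V 0 k = 0 ∧ V N k = 0) :
    ∀ B : ℝ,
      (∀ i : ℕ, 1 ≤ i → i ≤ N - 1 → ∀ k,
        |discOp M Δt x a rm rc rp qm qc qp V k i| ≤ B) →
      ∀ i : ℕ, i ≤ N → ∀ k, |V i k| ≤ B := by
  intro B hB i hi k
  -- mesh points lie in [0,1]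
  have hx_le : ∀ j l : ℕ, j ≤ l → l ≤ N → x j ≤ x l := by
    intro j l hjl
    induction l, hjl using Nat.le_induction with
    | base => intro _; exact le_refl _
    | succ n hn ih =>
      intro h
      exact le_trans (ih (by omega)) (le_of_lt (hx_mono n (by omega)))
  have hxIcc : ∀ j, j ≤ N → x j ∈ Set.Icc (0:ℝ) 1 := by
    intro j hj
    constructor
    · rw [← hx0]; exact hx_le 0 j (by omega) hj
    · rw [← hxN]; exact hx_le j N hj (le_refl _)
  have ha : ∀ (k m : Fin M), k ≠ m → ∀ j : ℕ, j ≤ N → a k m (x j) ≤ 0 :=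
    fun k m hkm j hj => ha_off k m hkm (x j) (hxIcc j hj)
  have hB0 : 0 ≤ B :=
    le_trans (abs_nonneg _) (hB 1 (le_refl _) (by omega) k)
  have hup : V i k ≤ B :=
    discOp_one_sided M hM N hN Δt (le_of_lt hΔt) x a ha rm rc rp qm qc qp
      h_pos h_rowsum V h_bc B hB0
      (fun j h1 h2 l => le_trans (le_abs_self _) (hB j h1 h2 l)) i hi k
  have hdown : -V i k ≤ B := by
    refine discOp_one_sided M hM N hN Δt (le_of_lt hΔt) x a ha rm rc rp qm qc qp
      h_pos h_rowsum (fun j l => -V j l) (fun l => by simp [(h_bc l).1, (h_bc l).2])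
      B hB0 ?_ i hi k
    intro j h1 h2 l
    rw [discOp_neg]
    exact le_trans (neg_le_abs _) (hB j h1 h2 l)
  rw [abs_le]
  exact ⟨by linarith, hup⟩
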